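/- arXiv:0709.1263 — 3 statements merged into one kernel-verified Lean document; each statement's English description precedes it below -/
import Mathlib

section
/- For any d×d bimatrix game (A,B) with rank(A+B) = d and d ≥ 2, there exists a bimatrix game (A',B) with rank(A'+B) ≤ d−1 having exactly the same set of Nash equilibria as (A,B). -/
open Matrix Finset

def IsNash {m n : ℕ} (A B : Matrix (Fin m) (Fin n) ℝ)
    (xb : Fin m → ℝ) (yb : Fin n → ℝ) : Prop :=
  xb ∈ stdSimplex ℝ (Fin m) ∧ yb ∈ stdSimplex ℝ (Fin n) ∧
  (∀ x ∈ stdSimplex ℝ (Fin m), x ⬝ᵥ A *ᵥ yb ≤ xb ⬝ᵥ A *ᵥ yb) ∧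
  (∀ y ∈ stdSimplex ℝ (Fin n), xb ⬝ᵥ B *ᵥ y ≤ xb ⬝ᵥ B *ᵥ yb)

lemma rank_lt_of_kernel {d : ℕ} (M : Matrix (Fin d) (Fin d) ℝ) (v : Fin d → ℝ)
    (hv : v ≠ 0) (hMv : M *ᵥ v = 0) : M.rank < d := by
  have hker : v ∈ LinearMap.ker M.mulVecLin := by
    simp [LinearMap.mem_ker, Matrix.mulVecLin_apply, hMv]
  have hnt : Nontrivial (LinearMap.ker M.mulVecLin) :=
    Submodule.nontrivial_iff_ne_bot.mpr (fun h => hv (by simpa [h] using hker))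
  have hpos : 0 < Module.finrank ℝ (LinearMap.ker M.mulVecLin) :=
    Module.finrank_pos
  have hrn := LinearMap.finrank_range_add_finrank_ker M.mulVecLin
  have : M.rank + Module.finrank ℝ (LinearMap.ker M.mulVecLin) = d := by
    simpa [Matrix.rank, Module.finrank_fintype_fun_eq_card] using hrn
  omega

lemma const_dot {d : ℕ} (x : Fin d → ℝ) (hx : ∑ i, x i = 1) (s : ℝ) :
    x ⬝ᵥ (fun _ => s) = s := by
  simp [dotProduct, ← Finset.sum_mul, hx]

theorem stmt4 {d : ℕ} (hd : 2 ≤ d) (A B : Matrix (Fin d) (Fin d) ℝ)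
    (hrank : (A + B).rank = d) :
    ∃ A' : Matrix (Fin d) (Fin d) ℝ, (A' + B).rank ≤ d - 1 ∧
      ∀ x y, IsNash A B x y ↔ IsNash A' B x y := by
  set M := A + B with hM
  have hdet : M.det ≠ 0 := by
    intro h0
    obtain ⟨v, hv, hMv⟩ := (Matrix.exists_mulVec_eq_zero_iff).mpr h0
    exact absurd hrank (Nat.ne_of_lt (rank_lt_of_kernel M v hv hMv))
  -- v solves M v = 1 (all ones)
  set v : Fin d → ℝ := M⁻¹ *ᵥ (fun _ => (1:ℝ)) with hvdef
  have hMv : M *ᵥ v = fun _ => (1:ℝ) := by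
    rw [hvdef, Matrix.mulVec_mulVec, Matrix.mul_nonsing_inv _ (isUnit_iff_ne_zero.mpr hdet),
      Matrix.one_mulVec]
  have hvne : v ≠ 0 := by
    intro h
    have : (fun _ => (1:ℝ) : Fin d → ℝ) = 0 := by rw [← hMv, h, Matrix.mulVec_zero]
    have := congrFun this ⟨0, by omega⟩
    simp at this
  have hvv : (0:ℝ) < v ⬝ᵥ v := by
    rcases Function.ne_iff.mp hvne with ⟨i, hi⟩
    have : 0 < v i * v i := mul_self_pos.mpr hi
    exact Finset.sum_pos' (fun j _ => mul_self_nonneg _) ⟨i, Finset.mem_univ i, this⟩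
  set c : Fin d → ℝ := fun j => v j / (v ⬝ᵥ v) with hcdef
  have hcv : c ⬝ᵥ v = 1 := by
    simp only [dotProduct, hcdef, div_mul_eq_mul_div, ← Finset.sum_div]
    exact div_self (by simpa [dotProduct] using ne_of_gt hvv)
  set C : Matrix (Fin d) (Fin d) ℝ := Matrix.of (fun _ j => c j) with hCdef
  have hCmul : ∀ y : Fin d → ℝ, C *ᵥ y = fun _ => c ⬝ᵥ y := by
    intro y; funext i; simp [hCdef, Matrix.mulVec, dotProduct]
  refine ⟨A - C, ?_, ?_⟩
  · -- rank bound: (A - C + B) v = M v - C v = 1 - (c⬝v)•1 = 0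
    have hker : (A - C + B) *ᵥ v = 0 := by
      have : (A - C + B) = M - C := by rw [hM]; abel
      rw [this, Matrix.sub_mulVec, hMv, hCmul, hcv]
      funext i; simp
    have := rank_lt_of_kernel (A - C + B) v hvne hker
    omega
  · intro x y
    have key : ∀ (x' y' : Fin d → ℝ), x' ∈ stdSimplex ℝ (Fin d) →
        x' ⬝ᵥ (A - C) *ᵥ y' = x' ⬝ᵥ A *ᵥ y' - c ⬝ᵥ y' := by
      intro x' y' hx'
      rw [Matrix.sub_mulVec, dotProduct_sub, hCmul, const_dot x' hx'.2]
    constructor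
    · rintro ⟨hx, hy, h1, h2⟩
      exact ⟨hx, hy, fun x' hx' => by
        rw [key x' y hx', key x y hx]; linarith [h1 x' hx'], h2⟩
    · rintro ⟨hx, hy, h1, h2⟩
      exact ⟨hx, hy, fun x' hx' => by
        have := h1 x' hx'
        rw [key x' y hx', key x y hx] at this; linarith, h2⟩
end

section
/- A pair (x*, y*) ∈ S₁ × S₂ is a Nash equilibrium of the bimatrix game (A,B) if and only if there exist π₁*, π₂* ∈ ℝ such that Ay* ≤ π₁*·1, (x*)ᵀB ≤ π₂*·1ᵀ, and (x*)ᵀ(A+B)y* − π₁* − π₂* = 0. -/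
open Matrix Finset

lemma aux_dot_le {k : ℕ} {x v : Fin k → ℝ} {c : ℝ}
    (hx : x ∈ stdSimplex ℝ (Fin k)) (hv : ∀ i, v i ≤ c) : x ⬝ᵥ v ≤ c :=
  calc x ⬝ᵥ v ≤ ∑ i, x i * c :=
        Finset.sum_le_sum fun i _ => mul_le_mul_of_nonneg_left (hv i) (hx.1 i)
    _ = (∑ i, x i) * c := by rw [Finset.sum_mul]
    _ = c := by rw [hx.2, one_mul]

lemma single_dot {k : ℕ} (i : Fin k) (v : Fin k → ℝ) : Pi.single i 1 ⬝ᵥ v = v i := by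
  simp [dotProduct, Pi.single_apply]

theorem stmt6 {m n : ℕ} (A B : Matrix (Fin m) (Fin n) ℝ)
    (xs : Fin m → ℝ) (ys : Fin n → ℝ)
    (hx : xs ∈ stdSimplex ℝ (Fin m)) (hy : ys ∈ stdSimplex ℝ (Fin n)) :
    IsNash A B xs ys ↔
      ∃ π₁ π₂ : ℝ, (∀ i, A i ⬝ᵥ ys ≤ π₁) ∧ (∀ j, xs ⬝ᵥ Bᵀ j ≤ π₂) ∧
        xs ⬝ᵥ (A + B) *ᵥ ys - π₁ - π₂ = 0 := by
  have hsplit : xs ⬝ᵥ (A + B) *ᵥ ys = xs ⬝ᵥ A *ᵥ ys + xs ⬝ᵥ B *ᵥ ys := by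
    rw [Matrix.add_mulVec, dotProduct_add]
  have hByrw : ∀ y : Fin n → ℝ, xs ⬝ᵥ B *ᵥ y = y ⬝ᵥ (fun j => xs ⬝ᵥ Bᵀ j) := by
    intro y
    rw [Matrix.dotProduct_mulVec, dotProduct_comm]
    rfl
  constructor
  · rintro ⟨_, _, hA, hB⟩
    refine ⟨xs ⬝ᵥ A *ᵥ ys, xs ⬝ᵥ B *ᵥ ys, ?_, ?_, by rw [hsplit]; ring⟩
    · intro i
      have := hA (Pi.single i 1) (single_mem_stdSimplex ℝ i)
      rwa [single_dot] at this
    · intro j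
      have := hB (Pi.single j 1) (single_mem_stdSimplex ℝ j)
      rwa [hByrw, single_dot] at this
  · rintro ⟨π₁, π₂, h1, h2, h3⟩
    have hA1 : xs ⬝ᵥ A *ᵥ ys ≤ π₁ := aux_dot_le hx (fun i => h1 i)
    have hB1 : xs ⬝ᵥ B *ᵥ ys ≤ π₂ := by
      rw [hByrw]; exact aux_dot_le hy h2
    rw [hsplit] at h3
    have hAeq : xs ⬝ᵥ A *ᵥ ys = π₁ := by linarith
    have hBeq : xs ⬝ᵥ B *ᵥ ys = π₂ := by linarith
    refine ⟨hx, hy, ?_, ?_⟩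
    · intro x hxm
      rw [hAeq]
      exact aux_dot_le hxm (fun i => h1 i)
    · intro y hym
      rw [hBeq, hByrw]
      exact aux_dot_le hym h2
end

section
/- Let (A,B) satisfy A+B = bcᵀ for b ∈ ℝᵐ, c ∈ ℝⁿ. Then (x*,y*) ∈ S₁×S₂ is a Nash equilibrium if and only if there exist π₁, π₂ ∈ ℝ and ξ ∈ [min_j cⱼ, max_j cⱼ] with Ay* ≤ π₁·1, (x*)ᵀB ≤ π₂·1ᵀ, cᵀy* = ξ, and ((x*)ᵀb)·ξ − π₁ − π₂ = 0. -/
/-!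
Against a fixed opponent strategy the payoff is linear on the simplex, so a strategy
is a best response iff its payoff dominates every pure payoff. At a Nash equilibrium take the two
payoffs for `π₁, π₂` and `ξ = cᵀy*`; they add up to `(x*ᵀb) ξ` because `A + B = bcᵀ`. Conversely,
`π₁` and `π₂` bound the payoffs of `(x*, y*)` from above, and the identity `(x*ᵀb) ξ = π₁ + π₂`
forces both bounds to be attained, so `x*` and `y*` are best responses.
-/

open Matrix Finset

section stdSimplex

variable {𝕜 ι : Type*} [CommSemiring 𝕜] [PartialOrder 𝕜] [IsOrderedRing 𝕜] [Fintype ι]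

theorem dotProduct_le_of_forall_le {u x : ι → 𝕜} (hx : x ∈ stdSimplex 𝕜 ι) {a : 𝕜}
    (hu : ∀ i, u i ≤ a) : u ⬝ᵥ x ≤ a :=
  calc u ⬝ᵥ x ≤ ∑ i, a * x i := sum_le_sum fun i _ ↦ mul_le_mul_of_nonneg_right (hu i) (hx.1 i)
    _ = a := by rw [← mul_sum, hx.2, mul_one]

theorem le_dotProduct_of_forall_le {u x : ι → 𝕜} (hx : x ∈ stdSimplex 𝕜 ι) {a : 𝕜}
    (hu : ∀ i, a ≤ u i) : a ≤ u ⬝ᵥ x :=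
  calc a = ∑ i, a * x i := by rw [← mul_sum, hx.2, mul_one]
    _ ≤ u ⬝ᵥ x := sum_le_sum fun i _ ↦ mul_le_mul_of_nonneg_right (hu i) (hx.1 i)

theorem forall_stdSimplex_dotProduct_le_iff [DecidableEq ι] {u : ι → 𝕜} {a : 𝕜} :
    (∀ x ∈ stdSimplex 𝕜 ι, u ⬝ᵥ x ≤ a) ↔ ∀ i, u i ≤ a := by
  refine ⟨fun h i ↦ ?_, fun h x hx ↦ dotProduct_le_of_forall_le hx h⟩
  simpa [dotProduct_single] using h _ (single_mem_stdSimplex 𝕜 i)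

end stdSimplex

theorem dotProduct_mem_Icc_of_mem_stdSimplex {𝕜 ι : Type*} [CommSemiring 𝕜] [LinearOrder 𝕜]
    [IsOrderedRing 𝕜] [Fintype ι] [Nonempty ι] (c : ι → 𝕜) {y : ι → 𝕜}
    (hy : y ∈ stdSimplex 𝕜 ι) :
    c ⬝ᵥ y ∈ Set.Icc (univ.inf' univ_nonempty c) (univ.sup' univ_nonempty c) :=
  ⟨le_dotProduct_of_forall_le hy fun i ↦ inf'_le c (mem_univ i),
    dotProduct_le_of_forall_le hy fun i ↦ le_sup' c (mem_univ i)⟩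

theorem isNash_iff_forall_pure {m n : ℕ} {A B : Matrix (Fin m) (Fin n) ℝ}
    {xs : Fin m → ℝ} {ys : Fin n → ℝ}
    (hx : xs ∈ stdSimplex ℝ (Fin m)) (hy : ys ∈ stdSimplex ℝ (Fin n)) :
    IsNash A B xs ys ↔
      (∀ i, A i ⬝ᵥ ys ≤ xs ⬝ᵥ A *ᵥ ys) ∧ (∀ j, xs ⬝ᵥ Bᵀ j ≤ xs ⬝ᵥ B *ᵥ ys) := by
  simp only [IsNash, hx, hy, true_and, dotProduct_comm _ (A *ᵥ ys), dotProduct_mulVec xs B]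
  exact and_congr forall_stdSimplex_dotProduct_le_iff forall_stdSimplex_dotProduct_le_iff

theorem dotProduct_mulVec_add_of_add_eq_vecMulVec {R ι κ : Type*} [CommSemiring R] [Fintype ι]
    [Fintype κ] {A B : Matrix ι κ R} {b : ι → R} {c : κ → R} (hAB : A + B = vecMulVec b c)
    (x : ι → R) (y : κ → R) : x ⬝ᵥ A *ᵥ y + x ⬝ᵥ B *ᵥ y = (x ⬝ᵥ b) * (c ⬝ᵥ y) := by
  rw [← dotProduct_add, ← add_mulVec, hAB, vecMulVec_mulVec, dotProduct_smul, op_smul_eq_mul,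
    mul_comm]

theorem stmt17 {m n : ℕ} [NeZero n] (A B : Matrix (Fin m) (Fin n) ℝ)
    (b : Fin m → ℝ) (c : Fin n → ℝ) (hAB : A + B = Matrix.vecMulVec b c)
    (xs : Fin m → ℝ) (ys : Fin n → ℝ)
    (hx : xs ∈ stdSimplex ℝ (Fin m)) (hy : ys ∈ stdSimplex ℝ (Fin n)) :
    IsNash A B xs ys ↔
      ∃ (π₁ π₂ ξ : ℝ),
        ξ ∈ Set.Icc (Finset.univ.inf' Finset.univ_nonempty c)
          (Finset.univ.sup' Finset.univ_nonempty c) ∧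
        (∀ i, A i ⬝ᵥ ys ≤ π₁) ∧ (∀ j, xs ⬝ᵥ Bᵀ j ≤ π₂) ∧
        c ⬝ᵥ ys = ξ ∧ (xs ⬝ᵥ b) * ξ - π₁ - π₂ = 0 := by
  have hsum := dotProduct_mulVec_add_of_add_eq_vecMulVec hAB xs ys
  rw [isNash_iff_forall_pure hx hy]
  constructor
  · rintro ⟨hA, hB⟩
    exact ⟨_, _, _, dotProduct_mem_Icc_of_mem_stdSimplex c hy, hA, hB, rfl, by linarith⟩
  · rintro ⟨π₁, π₂, _, -, hA, hB, rfl, hξ⟩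
    have hπ₁ : xs ⬝ᵥ A *ᵥ ys ≤ π₁ := by
      rw [dotProduct_comm]
      exact dotProduct_le_of_forall_le hx hA
    have hπ₂ : xs ⬝ᵥ B *ᵥ ys ≤ π₂ := by
      rw [dotProduct_mulVec]
      exact dotProduct_le_of_forall_le hy hB
    exact ⟨fun i ↦ (hA i).trans (by linarith), fun j ↦ (hB j).trans (by linarith)⟩
end
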